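/- Let ν₁, ν₂ > 0 and let θ, α, φ, β be real with sin 2α > 0, sin 2θ > 0, 0 < φ < π/2, 0 < |sin β| < 1. Suppose ν₁² sin²2θ + ν₂²((sin 2α cos²φ - sin 2θ sin²φ)² + 4 sin 2α sin 2θ sin²φ cos²φ cos²β) + 2ν₁ν₂ cos²2θ sin²φ = 2ν₁ν₂ √((sin²φ - sin 2α sin 2θ cos²φ)² + 4 sin 2α sin 2θ sin²φ cos²φ cos²β). Then cos 2θ = 0. -/
import Mathlib


open Real

set_option maxHeartbeats 1000000 in
private lemma stmt_13_aux (ν₁ ν₂ s a p q c K : ℝ) (hν₁ : 0 < ν₁) (hν₂ : 0 < ν₂)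
    (ha : 0 < a) (hs : 0 < s) (hp : 0 < p) (hq : 0 < q) (hc : 0 < c) (hc1 : c < 1)
    (hK : 0 < K) (hpytht : s ^ 2 + K = 1)
    (heq : ν₁ ^ 2 * s ^ 2 + ν₂ ^ 2 * ((a * q - s * p) ^ 2 + 4 * a * s * p * q * c)
        + 2 * ν₁ * ν₂ * K * p
      = 2 * ν₁ * ν₂ * Real.sqrt ((p - a * s * q) ^ 2 + 4 * a * s * p * q * c)) : False := by
  set A := (a * q - s * p) ^ 2 + 4 * a * s * p * q * c with hA_def
  set S := (p - a * s * q) ^ 2 + 4 * a * s * p * q * c with hS_def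
  have hA : 0 ≤ A := by positivity
  have hS : 0 ≤ S := by positivity
  set R := Real.sqrt S with hR_def
  have hR0 : 0 ≤ R := Real.sqrt_nonneg S
  have hR2 : R ^ 2 = S := Real.sq_sqrt hS
  set D := Real.sqrt A with hD_def
  have hD0 : 0 ≤ D := Real.sqrt_nonneg A
  have hD2 : D ^ 2 = A := Real.sq_sqrt hA
  have key : 2 * ν₁ * ν₂ * (s * D + K * p) ≤ 2 * ν₁ * ν₂ * R := by
    nlinarith [sq_nonneg (ν₁ * s - ν₂ * D), hD2, heq]
  have h1 : s * D + K * p ≤ R := by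
    have h2ν : 0 < 2 * ν₁ * ν₂ := by positivity
    exact le_of_mul_le_mul_left (by linarith [key]) h2ν
  have h0 : 0 ≤ s * D + K * p := by positivity
  have h2 : (s * D + K * p) ^ 2 ≤ R ^ 2 := pow_le_pow_left₀ h0 h1 2
  set M := p + (2 * c - 1) * a * s * q with hM_def
  have id1 : S = s ^ 2 * A + 2 * K * p * M - K ^ 2 * p ^ 2 := by
    rw [hS_def, hA_def, hM_def]
    linear_combination (p ^ 2 * (K - 1 - s ^ 2) + 2 * a * s * p * q * (1 - 2 * c)) * hpytht
  have id2 : S = M ^ 2 + 4 * a ^ 2 * s ^ 2 * q ^ 2 * (c * (1 - c)) := by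
    rw [hS_def, hM_def]; ring
  have h3' : 2 * (K * p) * (s * D + K * p) ≤ 2 * (K * p) * M := by
    nlinarith [h2, hR2, id1, hD2]
  have h3 : s * D + K * p ≤ M := by
    have hKp : 0 < 2 * (K * p) := by positivity
    exact le_of_mul_le_mul_left h3' hKp
  have h4 : (s * D) ^ 2 ≤ (M - K * p) ^ 2 := by
    have h5 : 0 ≤ s * D := by positivity
    have h6 : s * D ≤ M - K * p := by linarith
    exact pow_le_pow_left₀ h5 h6 2
  have h7 : (s * D) ^ 2 = (M - K * p) ^ 2 + 4 * a ^ 2 * s ^ 2 * q ^ 2 * (c * (1 - c)) := by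
    linear_combination s ^ 2 * hD2 + id2 - id1
  have hG : 0 < 4 * a ^ 2 * s ^ 2 * q ^ 2 * (c * (1 - c)) :=
    mul_pos (by positivity) (mul_pos hc (by linarith))
  linarith [h4, h7, hG]

theorem stmt_13 (ν₁ ν₂ θ α φ β : ℝ)
    (hν₁ : 0 < ν₁) (hν₂ : 0 < ν₂)
    (hα : 0 < Real.sin (2 * α)) (hθ : 0 < Real.sin (2 * θ))
    (hφ : 0 < φ) (hφ' : φ < π / 2)
    (hβ : 0 < |Real.sin β|) (hβ' : |Real.sin β| < 1)
    (heq : ν₁ ^ 2 * Real.sin (2 * θ) ^ 2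
        + ν₂ ^ 2 * ((Real.sin (2 * α) * Real.cos φ ^ 2 - Real.sin (2 * θ) * Real.sin φ ^ 2) ^ 2
          + 4 * Real.sin (2 * α) * Real.sin (2 * θ) * Real.sin φ ^ 2 * Real.cos φ ^ 2
            * Real.cos β ^ 2)
        + 2 * ν₁ * ν₂ * Real.cos (2 * θ) ^ 2 * Real.sin φ ^ 2
      = 2 * ν₁ * ν₂ *
        Real.sqrt ((Real.sin φ ^ 2 - Real.sin (2 * α) * Real.sin (2 * θ) * Real.cos φ ^ 2) ^ 2
          + 4 * Real.sin (2 * α) * Real.sin (2 * θ) * Real.sin φ ^ 2 * Real.cos φ ^ 2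
            * Real.cos β ^ 2)) :
    Real.cos (2 * θ) = 0 := by
  by_contra hcne
  have hsinφ : 0 < Real.sin φ := Real.sin_pos_of_pos_of_lt_pi hφ (by
    have := Real.pi_gt_three; linarith)
  have hcosφ : 0 < Real.cos φ := Real.cos_pos_of_mem_Ioo ⟨by linarith [Real.pi_pos], hφ'⟩
  have hpythβ : Real.sin β ^ 2 + Real.cos β ^ 2 = 1 := Real.sin_sq_add_cos_sq β
  have hsabs := sq_abs (Real.sin β)
  have hc : 0 < Real.cos β ^ 2 := by nlinarith
  have hc1 : Real.cos β ^ 2 < 1 := by nlinarith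
  exact stmt_13_aux ν₁ ν₂ (Real.sin (2 * θ)) (Real.sin (2 * α)) (Real.sin φ ^ 2)
    (Real.cos φ ^ 2) (Real.cos β ^ 2) (Real.cos (2 * θ) ^ 2)
    hν₁ hν₂ hα hθ (by positivity) (by positivity) hc hc1 (by positivity)
    (Real.sin_sq_add_cos_sq (2 * θ)) heq
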